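/- Let m ≥ 1, let y ∈ F₂^m, let B ⊆ F₂^m be a binary linear code all of whose codewords have even Hamming weight, and set ε_v = (−1)^{y·v} for v ∈ B. Let G be the simple graph on {1,…,m} in which distinct i and j are adjacent if and only if e_i + e_j ∈ B. Suppose that for every integer l ≥ 3, Σ_{v∈B} ε_v (i tan(2π/2^l))^{w_H(v)} = (sec(2π/2^l))^m. Then G has no isolated vertices, so {1,…,m} is partitioned by the connected components Γ₁,…,Γ_t of G; moreover each N_k = |Γ_k| is even and w_H(y|_{Γ_k}) = N_k/2 for every k. -/

import Mathlib

/-!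
With `z = exp (iθ)` and `θ = 2π/2^l` one has `1 + z² = 2z cos θ` and `1 - z² = -2iz sin θ`, so, the
weights in `B` being even, the hypothesis at `l` says
`∑_{v ∈ B} ε_v (1 + z²)^(m - w(v)) (1 - z²)^w(v) = (2z)^m`. By the MacWilliams identity the left
side is `|B| ∑_{u ∈ y + B^⊥} z^(2 w(u))`; these `z` being pairwise distinct, this is an identity
of polynomials, so every word of the coset `y + B^⊥` has weight `m/2`.

For `x ∈ B^⊥` this reads `∑_j (-1)^(y_j) (-1)^(x_j) = 0`. Multiplying by `(-1)^(x_i)` and summing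
over `B^⊥`, orthogonality of characters keeps exactly the `j` with `e_i + e_j ∈ B^⊥⊥ = B`, i.e. the
vertices of the component `Γ` of `i`. Hence `∑_{j ∈ Γ} (-1)^(y_j) = 0`: the component is balanced,
and in particular has more than one vertex.
-/

open Matrix Finset

section Sign

variable {R ι : Type*}

lemma ZMod.two_cases (a : ZMod 2) : a = 0 ∨ a = 1 := by decide +revert

lemma neg_one_pow_val_add [Monoid R] [HasDistribNeg R] (a b : ZMod 2) :
    (-1 : R) ^ (a + b).val = (-1) ^ a.val * (-1) ^ b.val := by
  rcases a.two_cases with rfl | rfl <;> rcases b.two_cases with rfl | rfl <;>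
    simp [show (1 + 1 : ZMod 2) = 0 from rfl, ZMod.val_one]

lemma prod_neg_one_pow_val [CommMonoid R] [HasDistribNeg R] (s : Finset ι)
    (f : ι → ZMod 2) : ∏ j ∈ s, (-1 : R) ^ (f j).val = (-1) ^ (∑ j ∈ s, f j).val := by
  induction s using Finset.cons_induction with
  | empty => simp
  | cons a s ha ih => rw [prod_cons, sum_cons, ih, neg_one_pow_val_add]

lemma sum_neg_one_pow_val (s : Finset ι) (f : ι → ZMod 2) :
    ∑ j ∈ s, (-1 : ℤ) ^ (f j).val = #s - 2 * #{j ∈ s | f j ≠ 0} := by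
  have hsign : ∀ j, (-1 : ℤ) ^ (f j).val = 1 - 2 * if f j ≠ 0 then 1 else 0 := by
    intro j
    rcases (f j).two_cases with h | h <;> simp [h, ZMod.val_one]
  simp only [hsign, sum_sub_distrib, ← mul_sum, sum_boole, sum_const, nsmul_eq_mul, mul_one]

lemma hammingNorm_eq_sum_val [Fintype ι] (u : ι → ZMod 2) :
    hammingNorm u = ∑ j, (u j).val := by
  rw [hammingNorm, card_filter]
  refine sum_congr rfl fun j _ => ?_
  rcases (u j).two_cases with h | h <;> simp [h, ZMod.val_one]

end Sign

section DualCode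

variable {K ι : Type*} [Field K] [Fintype ι]

def dualCode (C : Submodule K (ι → K)) : Submodule K (ι → K) :=
  LinearMap.BilinForm.orthogonal (dotProductBilin K K) C

lemma mem_dualCode {C : Submodule K (ι → K)} {x : ι → K} :
    x ∈ dualCode C ↔ ∀ v ∈ C, v ⬝ᵥ x = 0 := Iff.rfl

lemma dualCode_dualCode (C : Submodule K (ι → K)) : dualCode (dualCode C) = C := by
  refine LinearMap.BilinForm.orthogonal_orthogonal ⟨fun x hx => ?_, fun x hx => ?_⟩
    (fun x y h => ?_) C
  · exact dotProduct_eq_zero_iff.mp hx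
  · exact dotProduct_eq_zero_iff.mp fun w => by simpa [dotProductBilin, dotProduct_comm] using hx w
  · simpa [dotProductBilin, dotProduct_comm] using h

end DualCode

section Code

open scoped Classical

variable {ι : Type*} [Fintype ι] [DecidableEq ι]

lemma sum_neg_one_pow_dotProduct (C : Submodule (ZMod 2) (ι → ZMod 2)) (w : ι → ZMod 2) :
    ∑ x ∈ univ.filter (· ∈ C), (-1 : ℤ) ^ (x ⬝ᵥ w).val
      = if w ∈ dualCode C then (#(univ.filter (· ∈ C)) : ℤ) else 0 := by
  split_ifs with hw
  · rw [card_eq_sum_ones, Nat.cast_sum, Nat.cast_one]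
    refine sum_congr rfl fun x hx => ?_
    rw [mem_dualCode.mp hw x (mem_filter.mp hx).2, ZMod.val_zero, pow_zero]
  · obtain ⟨x₀, hx₀, hne⟩ : ∃ x₀ ∈ C, x₀ ⬝ᵥ w ≠ 0 := by
      simpa [mem_dualCode] using hw
    have hx₀w : x₀ ⬝ᵥ w = 1 := (x₀ ⬝ᵥ w).two_cases.resolve_left hne
    have hshift := sum_equiv (Equiv.addRight x₀) (s := univ.filter (· ∈ C))
      (t := univ.filter (· ∈ C)) (f := fun x => (-1 : ℤ) ^ ((x + x₀) ⬝ᵥ w).val)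
      (g := fun x => (-1 : ℤ) ^ (x ⬝ᵥ w).val)
      (by simp [C.add_mem_iff_left hx₀]) (fun _ _ => rfl)
    simp only [add_dotProduct, neg_one_pow_val_add, hx₀w, ZMod.val_one, pow_one, mul_neg_one,
      sum_neg_distrib] at hshift
    linarith

lemma one_add_pow_mul_one_sub_pow {R : Type*} [CommRing R] (q : R) (v : ι → ZMod 2) :
    (1 + q) ^ (Fintype.card ι - hammingNorm v) * (1 - q) ^ hammingNorm v
      = ∑ u : ι → ZMod 2, (-1 : R) ^ (u ⬝ᵥ v).val * q ^ hammingNorm u := by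
  have hfactor : ∀ j, (if v j ≠ 0 then 1 - q else 1 + q)
      = ∑ b : ZMod 2, (-1 : R) ^ (b * v j).val * q ^ b.val := by
    intro j
    rw [show (univ : Finset (ZMod 2)) = {0, 1} from rfl, sum_pair zero_ne_one]
    rcases (v j).two_cases with h | h <;> simp [h, ZMod.val_one, sub_eq_add_neg]
  have hcard : #{j | ¬ v j ≠ 0} = Fintype.card ι - hammingNorm v := by
    rw [← card_univ, ← card_filter_add_card_filter_not (s := univ) (fun j => v j ≠ 0)]
    simp [hammingNorm]
  calc (1 + q) ^ (Fintype.card ι - hammingNorm v) * (1 - q) ^ hammingNorm v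
      = ∏ j, (if v j ≠ 0 then 1 - q else 1 + q) := by
        rw [prod_ite, prod_const, prod_const, hcard, mul_comm]; rfl
    _ = _ := by
      rw [prod_congr rfl fun j _ => hfactor j, Fintype.prod_sum]
      refine sum_congr rfl fun u _ => ?_
      rw [prod_mul_distrib, prod_neg_one_pow_val, prod_pow_eq_pow_sum, ← hammingNorm_eq_sum_val]
      rfl

/-- The MacWilliams identity for the weight enumerator of the coset `y + C^⊥`. -/
lemma sum_neg_one_pow_mul_one_add_pow_mul_one_sub_pow {R : Type*} [CommRing R]
    (C : Submodule (ZMod 2) (ι → ZMod 2)) (y : ι → ZMod 2) (q : R) :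
    ∑ v ∈ univ.filter (· ∈ C), (-1 : R) ^ (y ⬝ᵥ v).val *
        ((1 + q) ^ (Fintype.card ι - hammingNorm v) * (1 - q) ^ hammingNorm v)
      = #(univ.filter (· ∈ C)) *
          ∑ u ∈ univ.filter (fun u => u + y ∈ dualCode C), q ^ hammingNorm u := by
  simp_rw [one_add_pow_mul_one_sub_pow, mul_sum]
  rw [sum_comm, sum_filter]
  refine sum_congr rfl fun u _ => ?_
  have hchar := congrArg (Int.cast : ℤ → R) (sum_neg_one_pow_dotProduct C (u + y))
  push_cast at hchar
  calc _ = ∑ v ∈ univ.filter (· ∈ C),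
        (-1 : R) ^ (v ⬝ᵥ (u + y)).val * q ^ hammingNorm u := by
        refine sum_congr rfl fun v _ => ?_
        rw [dotProduct_add, neg_one_pow_val_add, dotProduct_comm v u, dotProduct_comm v y]
        ring
    _ = _ := by rw [← sum_mul, hchar]; split_ifs <;> simp

end Code

section Trigonometric

open Complex

lemma one_add_exp_mul_I_sq (θ : ℂ) : 1 + exp (θ * I) ^ 2 = 2 * exp (θ * I) * cos θ := by
  rw [exp_mul_I]
  linear_combination sin θ ^ 2 * I_sq - sin_sq_add_cos_sq θ

lemma one_sub_exp_mul_I_sq {θ : ℂ} (hθ : cos θ ≠ 0) :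
    1 - exp (θ * I) ^ 2 = 2 * exp (θ * I) * cos θ * (-I * tan θ) := by
  have htan : tan θ * cos θ = sin θ := tan_mul_cos hθ
  rw [exp_mul_I]
  linear_combination sin θ ^ 2 * I_sq - sin_sq_add_cos_sq θ
    + 2 * I * (cos θ + sin θ * I) * htan

lemma one_add_exp_pow_mul_one_sub_exp_pow {θ : ℂ} (hθ : cos θ ≠ 0) {n w : ℕ}
    (hwn : w ≤ n) (hw : Even w) :
    (1 + exp (θ * I) ^ 2) ^ (n - w) * (1 - exp (θ * I) ^ 2) ^ w
      = (2 * exp (θ * I) * cos θ) ^ n * (I * tan θ) ^ w := by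
  rw [one_add_exp_mul_I_sq, one_sub_exp_mul_I_sq hθ, mul_pow _ (-I * tan θ), neg_mul,
    hw.neg_pow, ← mul_assoc, pow_sub_mul_pow _ hwn]

lemma cos_two_pi_div_two_pow_pos {l : ℕ} (hl : 3 ≤ l) : 0 < Real.cos (2 * Real.pi / 2 ^ l) := by
  have hpos : 0 < 2 * Real.pi / 2 ^ l := by positivity
  refine Real.cos_pos_of_mem_Ioo ⟨by linarith [Real.pi_pos], ?_⟩
  rw [div_lt_iff₀ (by positivity)]
  have : (8 : ℝ) ≤ 2 ^ l := by
    calc (8 : ℝ) = 2 ^ 3 := by norm_num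
      _ ≤ 2 ^ l := pow_le_pow_right₀ (by norm_num) hl
  nlinarith [Real.pi_pos]

lemma injOn_exp_two_pi_div_two_pow :
    Set.InjOn (fun l : ℕ => exp ((2 * Real.pi / 2 ^ l : ℝ) * I)) (Set.Ici 1) := by
  intro k hk l hl h
  have hmem : ∀ {j : ℕ}, 1 ≤ j → 2 * Real.pi / 2 ^ j ∈ Set.Icc 0 Real.pi := fun {j} hj =>
    ⟨by positivity, by
      rw [div_le_iff₀ (by positivity)]
      have : (2 : ℝ) ≤ 2 ^ j := by
        simpa using pow_le_pow_right₀ (by norm_num : (1 : ℝ) ≤ 2) hj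
      nlinarith [Real.pi_pos]⟩
  have hcos := congrArg re h
  simp only [exp_ofReal_mul_I_re] at hcos
  have := Real.injOn_cos (hmem hk) (hmem hl) hcos
  rw [div_eq_div_iff (by positivity) (by positivity)] at this
  have hpow : (2 : ℝ) ^ k = 2 ^ l :=
    mul_left_cancel₀ (by positivity : 2 * Real.pi ≠ 0) (by linarith)
  exact Nat.pow_right_injective le_rfl (by exact_mod_cast hpow)

end Trigonometric

section Polynomial

open Polynomial

lemma eq_of_C_mul_sum_X_pow_eq {K α : Type*} [Field K] [CharZero K] {S : Finset α}
    {f : α → ℕ} {c a : K} (hc : c ≠ 0) {n : ℕ}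
    (h : C c * ∑ u ∈ S, X ^ f u = C a * X ^ n) : ∀ u ∈ S, f u = n := by
  classical
  intro u hu
  by_contra hne
  have hcoeff := congrArg (coeff · (f u)) h
  simp only [coeff_C_mul, finsetSum_coeff, coeff_X_pow, if_neg hne, mul_zero, sum_boole]
    at hcoeff
  have hpos : 0 < #(S.filter (fun u' => f u = f u')) := card_pos.mpr ⟨u, by simp [hu]⟩
  simp [hc, hpos.ne'] at hcoeff

end Polynomial

section Weight

open scoped Classical
open Complex Polynomial

variable {ι : Type*} [Fintype ι] [DecidableEq ι] {B : Submodule (ZMod 2) (ι → ZMod 2)}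
  {y : ι → ZMod 2}

lemma sum_neg_one_pow_mul_one_add_exp_pow_mul_one_sub_exp_pow
    (hev : ∀ v ∈ B, Even (hammingNorm v)) {θ : ℝ} (hθ : Real.cos θ ≠ 0)
    (hsum : ∑ v ∈ univ.filter (· ∈ B),
        (-1 : ℂ) ^ (y ⬝ᵥ v).val * (I * Real.tan θ) ^ hammingNorm v
      = (Real.cos θ : ℂ)⁻¹ ^ Fintype.card ι) :
    ∑ v ∈ univ.filter (· ∈ B), (-1 : ℂ) ^ (y ⬝ᵥ v).val *
        ((1 + exp (θ * I) ^ 2) ^ (Fintype.card ι - hammingNorm v) *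
          (1 - exp (θ * I) ^ 2) ^ hammingNorm v)
      = (2 * exp (θ * I)) ^ Fintype.card ι := by
  have hθ' : cos (θ : ℂ) ≠ 0 := by exact_mod_cast hθ
  rw [sum_congr rfl fun v hv => by
    rw [one_add_exp_pow_mul_one_sub_exp_pow hθ' hammingNorm_le_card_fintype
      (hev v (mem_filter.mp hv).2), mul_left_comm], ← mul_sum]
  simp only [ofReal_tan, ofReal_cos] at hsum
  rw [hsum, ← mul_pow, mul_inv_cancel_right₀ hθ']

lemma two_mul_hammingNorm_eq_card (hev : ∀ v ∈ B, Even (hammingNorm v))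
    (hsum : ∀ l : ℕ, 3 ≤ l →
      ∑ v ∈ univ.filter (· ∈ B),
          (-1 : ℂ) ^ (y ⬝ᵥ v).val * (I * Real.tan (2 * Real.pi / 2 ^ l)) ^ hammingNorm v
        = (Real.cos (2 * Real.pi / 2 ^ l) : ℂ)⁻¹ ^ Fintype.card ι)
    {u : ι → ZMod 2} (hu : u + y ∈ dualCode B) : 2 * hammingNorm u = Fintype.card ι := by
  set S := univ.filter (fun u => u + y ∈ dualCode B)
  have hB : (#(univ.filter (· ∈ B)) : ℂ) ≠ 0 :=
    Nat.cast_ne_zero.mpr (card_ne_zero.mpr ⟨0, by simp [B.zero_mem]⟩)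
  have hpoly : C (#(univ.filter (· ∈ B)) : ℂ) * ∑ u ∈ S, X ^ (2 * hammingNorm u)
      = C (2 ^ Fintype.card ι) * X ^ Fintype.card ι := by
    refine Polynomial.eq_of_infinite_eval_eq _ _ <|
      ((Set.Ici_infinite 3).image (injOn_exp_two_pi_div_two_pow.mono
        (Set.Ici_subset_Ici.mpr (by norm_num)))).mono ?_
    rintro _ ⟨l, hl, rfl⟩
    simp only [Set.mem_ofPred_eq, eval_mul, eval_C, eval_finsetSum, eval_pow, eval_X, pow_mul]
    rw [← sum_neg_one_pow_mul_one_add_pow_mul_one_sub_pow, ← mul_pow,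
      ← sum_neg_one_pow_mul_one_add_exp_pow_mul_one_sub_exp_pow hev
        (cos_two_pi_div_two_pow_pos hl).ne' (hsum l hl)]
  exact eq_of_C_mul_sum_X_pow_eq hB hpoly u (by simpa [S] using hu)

end Weight

section Graph

variable {ι : Type*} [DecidableEq ι] {B : Submodule (ZMod 2) (ι → ZMod 2)} {G : SimpleGraph ι}

lemma reachable_iff_single_add_single_mem
    (hG : ∀ i j, G.Adj i j ↔ i ≠ j ∧ Pi.single i (1 : ZMod 2) + Pi.single j 1 ∈ B)
    {i j : ι} :
    G.Reachable i j ↔ Pi.single i (1 : ZMod 2) + Pi.single j 1 ∈ B := by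
  constructor
  · rintro ⟨p⟩
    induction p with
    | nil => simp [ZModModule.add_self]
    | @cons u v w huv _ ih =>
      have hsplit : (Pi.single u 1 + Pi.single v 1) + (Pi.single v 1 + Pi.single w 1)
          = (Pi.single u 1 + Pi.single w 1 : ι → ZMod 2) := by
        rw [add_assoc, ← add_assoc (Pi.single v 1), ZModModule.add_self, zero_add]
      exact hsplit ▸ B.add_mem ((hG u v).mp huv).2 ih
  · intro h
    by_cases hij : i = j
    · exact hij ▸ SimpleGraph.Reachable.refl i
    · exact ((hG i j).mpr ⟨hij, h⟩).reachable

open scoped Classical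

variable [Fintype ι]

lemma sum_neg_one_pow_val_add_eq_ite_reachable
    (hG : ∀ i j, G.Adj i j ↔ i ≠ j ∧ Pi.single i (1 : ZMod 2) + Pi.single j 1 ∈ B)
    (i j : ι) :
    ∑ x ∈ univ.filter (· ∈ dualCode B), (-1 : ℤ) ^ (x i + x j).val
      = if G.Reachable i j then (#(univ.filter (· ∈ dualCode B)) : ℤ) else 0 := by
  have hdot : ∀ x : ι → ZMod 2, x ⬝ᵥ (Pi.single i 1 + Pi.single j 1) = x i + x j := by
    simp [dotProduct_add, dotProduct_single]
  simp only [← hdot, sum_neg_one_pow_dotProduct, dualCode_dualCode,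
    reachable_iff_single_add_single_mem hG]

lemma two_mul_card_reachable_and_ne_zero
    (hG : ∀ i j, G.Adj i j ↔ i ≠ j ∧ Pi.single i (1 : ZMod 2) + Pi.single j 1 ∈ B)
    {y : ι → ZMod 2} (hw : ∀ x ∈ dualCode B, 2 * hammingNorm (x + y) = Fintype.card ι)
    (i : ι) :
    2 * #{j | G.Reachable i j ∧ y j ≠ 0} = #{j | G.Reachable i j} := by
  set D := univ.filter (· ∈ dualCode B)
  have hbal : ∀ x ∈ D, ∑ j, (-1 : ℤ) ^ (x j + y j).val = 0 := by
    intro x hx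
    have hsum := sum_neg_one_pow_val univ (x + y)
    rw [card_univ, ← hw x (mem_filter.mp hx).2, hammingNorm] at hsum
    simpa using hsum
  have hD : (#D : ℤ) ≠ 0 := Nat.cast_ne_zero.mpr (card_ne_zero.mpr ⟨0, by simp [D]⟩)
  have hcomp : (#D : ℤ) * ∑ j ∈ {j | G.Reachable i j}, (-1 : ℤ) ^ (y j).val = 0 :=
    calc (#D : ℤ) * ∑ j ∈ {j | G.Reachable i j}, (-1 : ℤ) ^ (y j).val
        = ∑ j, ∑ x ∈ D, (-1 : ℤ) ^ (x i + x j).val * (-1) ^ (y j).val := by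
          simp only [D, ← sum_mul, sum_neg_one_pow_val_add_eq_ite_reachable hG, ite_mul,
            zero_mul, mul_ite, mul_zero, mul_sum, sum_filter]
      _ = ∑ x ∈ D, (-1 : ℤ) ^ (x i).val * ∑ j, (-1 : ℤ) ^ (x j + y j).val := by
          rw [sum_comm]
          simp only [mul_sum, neg_one_pow_val_add, mul_assoc]
      _ = 0 := sum_eq_zero fun x hx => by rw [hbal x hx, mul_zero]
  have hcount := sum_neg_one_pow_val {j | G.Reachable i j} y
  rw [(mul_eq_zero.mp hcomp).resolve_left hD, filter_filter] at hcount
  omega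

end Graph

open scoped Classical in
theorem balanced_components_necessary_general (m : ℕ) (y : Fin m → ZMod 2)
    (B : Submodule (ZMod 2) (Fin m → ZMod 2))
    (hev : ∀ v ∈ B, Even (hammingNorm v))
    (G : SimpleGraph (Fin m))
    (hG : ∀ i j, G.Adj i j ↔ i ≠ j ∧ (Pi.single i (1 : ZMod 2) + Pi.single j 1) ∈ B)
    (hsum : ∀ l : ℕ, 3 ≤ l →
      ∑ v ∈ Finset.univ.filter (fun v : Fin m → ZMod 2 => v ∈ B),
          (-1 : ℂ) ^ (y ⬝ᵥ v).val *
            (Complex.I * Real.tan (2 * Real.pi / 2 ^ l)) ^ hammingNorm v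
        = ((Real.cos (2 * Real.pi / 2 ^ l) : ℂ))⁻¹ ^ m) :
    (∀ i : Fin m, ∃ j, G.Adj i j) ∧
    (∀ i : Fin m,
      Even ({j | G.Reachable i j}.ncard) ∧
      2 * ({j | G.Reachable i j ∧ y j ≠ 0}.ncard) = {j | G.Reachable i j}.ncard) := by
  have hweight : ∀ x ∈ dualCode B, 2 * hammingNorm (x + y) = Fintype.card (Fin m) :=
    fun x hx => two_mul_hammingNorm_eq_card hev (by simpa only [Fintype.card_fin] using hsum)
      (by rwa [add_assoc, ZModModule.add_self, add_zero])
  have hbal : ∀ i, 2 * {j | G.Reachable i j ∧ y j ≠ 0}.ncard = {j | G.Reachable i j}.ncard :=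
    fun i => by
      simpa only [Set.ncard_eq_toFinset_card', Set.toFinset_ofPred]
        using two_mul_card_reachable_and_ne_zero hG hweight i
  refine ⟨fun i => ?_, fun i => ⟨hbal i ▸ even_two_mul _, hbal i⟩⟩
  by_contra! hisolated
  have hcomponent : {j | G.Reachable i j} = {i} := by
    ext j
    refine ⟨fun ⟨p⟩ => ?_, fun hj => hj ▸ SimpleGraph.Reachable.refl i⟩
    cases p with
    | nil => rfl
    | cons hadj _ => exact (hisolated _ hadj).elim
  have := hbal i
  rw [hcomponent, Set.ncard_singleton] at this
  omega

open scoped Classical in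
/-- necessity direction of Theorem 8, in coding-theoretic form.
Let `B ⊆ F₂^m` be a binary linear code with all codeword weights even, `ε_v = (−1)^{y·v}`,
and let `G` be the graph on `{1,…,m}` with `i ~ j` iff `i ≠ j` and `e_i + e_j ∈ B`.
If `Σ_{v∈B} ε_v (i tan(2π/2^l))^{w_H(v)} = (sec(2π/2^l))^m` for every `l ≥ 3`, then `G` has no
isolated vertices, every connected component `Γ_k` has even size `N_k`, and
`w_H(y|_{Γ_k}) = N_k/2` for every `k`. -/
theorem balanced_components_necessary (m : ℕ) (hm : 1 ≤ m) (y : Fin m → ZMod 2)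
    (B : Submodule (ZMod 2) (Fin m → ZMod 2))
    (hev : ∀ v ∈ B, Even (hammingNorm v))
    (G : SimpleGraph (Fin m))
    (hG : ∀ i j, G.Adj i j ↔ i ≠ j ∧ (Pi.single i (1 : ZMod 2) + Pi.single j 1) ∈ B)
    (hsum : ∀ l : ℕ, 3 ≤ l →
      ∑ v ∈ Finset.univ.filter (fun v : Fin m → ZMod 2 => v ∈ B),
          (-1 : ℂ) ^ (y ⬝ᵥ v).val *
            (Complex.I * Real.tan (2 * Real.pi / 2 ^ l)) ^ hammingNorm v
        = ((Real.cos (2 * Real.pi / 2 ^ l) : ℂ))⁻¹ ^ m) :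
    (∀ i : Fin m, ∃ j, G.Adj i j) ∧
    (∀ i : Fin m,
      Even ({j | G.Reachable i j}.ncard) ∧
      2 * ({j | G.Reachable i j ∧ y j ≠ 0}.ncard) = {j | G.Reachable i j}.ncard) :=
  balanced_components_necessary_general m y B hev G hG hsum
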